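/- arXiv:1904.01252 — 2 statements merged into one kernel-verified Lean document; each statement's English description precedes it below -/
import Mathlib

section
/- The q-binomial theorem: for complex a, z, q with |z| < 1 and |q| < 1, the series ∑_{k=0}^∞ ((a;q)_k / (q;q)_k) z^k converges and equals (az;q)_∞ / (z;q)_∞. -/
open Complex Finset

noncomputable section

/-- finite q-Pochhammer symbol (z;q)_k -/
def qPoch (z q : ℂ) (k : ℕ) : ℂ := ∏ j ∈ Finset.range k, (1 - z * q ^ j)

/-- infinite q-Pochhammer symbol (z;q)_∞ -/
def qPochInf (z q : ℂ) : ℂ := ∏' j : ℕ, (1 - z * q ^ j)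

lemma qPoch_succ (z q : ℂ) (k : ℕ) : qPoch z q (k + 1) = qPoch z q k * (1 - z * q ^ k) :=
  Finset.prod_range_succ _ _

lemma ne_one_of_norm_lt {x : ℂ} (h : ‖x‖ < 1) : (1 : ℂ) - x ≠ 0 := by
  intro hx
  have : x = 1 := by linear_combination -hx
  simp [this] at h

lemma qPochq_ne_zero {q : ℂ} (hq : ‖q‖ < 1) (k : ℕ) : qPoch q q k ≠ 0 := by
  apply Finset.prod_ne_zero_iff.2
  intro j _
  apply ne_one_of_norm_lt
  have h0 : (0:ℝ) ≤ ‖q‖ := norm_nonneg q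
  calc ‖q * q ^ j‖ = ‖q‖ * ‖q‖ ^ j := by rw [norm_mul, norm_pow]
    _ ≤ ‖q‖ * 1 := by
        apply mul_le_mul_of_nonneg_left _ h0
        exact pow_le_one₀ h0 hq.le
    _ < 1 := by simpa using hq

/-- key real estimate: (1-x)⁻¹ ≤ exp (x/(1-r)) for 0 ≤ x ≤ r < 1 -/
lemma inv_one_sub_le_exp {x r : ℝ} (hx : 0 ≤ x) (hxr : x ≤ r) (hr : r < 1) :
    (1 - x)⁻¹ ≤ Real.exp (x / (1 - r)) := by
  have h1 : (0:ℝ) < 1 - r := by linarith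
  have h2 : (0:ℝ) < 1 - x := by linarith
  have ht : 0 ≤ x / (1 - r) := by positivity
  have h4 : x ≤ x / (1 - r) * (1 - x) := by
    have := mul_le_mul_of_nonneg_left (by linarith : 1 - r ≤ 1 - x) ht
    rwa [div_mul_cancel₀ x h1.ne'] at this
  have key : (1 - x)⁻¹ ≤ 1 + x / (1 - r) := by
    rw [inv_eq_one_div, div_le_iff₀ h2]
    nlinarith [h4]
  exact key.trans (by simpa [add_comm] using Real.add_one_le_exp (x / (1 - r)))

lemma geom_bound {r : ℝ} (h0 : 0 ≤ r) (hr : r < 1) (k : ℕ) :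
    ∑ j ∈ Finset.range k, r ^ j ≤ (1 - r)⁻¹ :=
  sum_le_hasSum _ (fun i _ => pow_nonneg h0 i) (hasSum_geometric_of_lt_one h0 hr)

lemma norm_qPoch_le (w q : ℂ) (hq : ‖q‖ < 1) (k : ℕ) :
    ‖qPoch w q k‖ ≤ Real.exp (‖w‖ * (1 - ‖q‖)⁻¹) := by
  have h0 : (0:ℝ) ≤ ‖q‖ := norm_nonneg q
  rw [qPoch, norm_prod]
  calc ∏ j ∈ Finset.range k, ‖1 - w * q ^ j‖
      ≤ ∏ j ∈ Finset.range k, Real.exp (‖w‖ * ‖q‖ ^ j) := by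
        apply Finset.prod_le_prod (fun j _ => norm_nonneg _)
        intro j _
        calc ‖1 - w * q ^ j‖ ≤ ‖(1:ℂ)‖ + ‖w * q ^ j‖ := norm_sub_le _ _
          _ = 1 + ‖w‖ * ‖q‖ ^ j := by rw [norm_one, norm_mul, norm_pow]
          _ ≤ Real.exp (‖w‖ * ‖q‖ ^ j) := by
              simpa [add_comm] using Real.add_one_le_exp (‖w‖ * ‖q‖ ^ j)
    _ = Real.exp (∑ j ∈ Finset.range k, ‖w‖ * ‖q‖ ^ j) := (Real.exp_sum _ _).symm
    _ ≤ Real.exp (‖w‖ * (1 - ‖q‖)⁻¹) := by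
        apply Real.exp_le_exp.2
        rw [← Finset.mul_sum]
        exact mul_le_mul_of_nonneg_left (geom_bound h0 hq k) (norm_nonneg w)

lemma norm_qPochq_inv_le {q : ℂ} (hq : ‖q‖ < 1) (k : ℕ) :
    ‖qPoch q q k‖⁻¹ ≤ Real.exp (‖q‖ * (1 - ‖q‖)⁻¹ * (1 - ‖q‖)⁻¹) := by
  have h0 : (0:ℝ) ≤ ‖q‖ := norm_nonneg q
  have hfac : ∀ j : ℕ, (0:ℝ) < 1 - ‖q‖ ^ (j + 1) := by
    intro j
    have : ‖q‖ ^ (j+1) ≤ ‖q‖ := pow_le_of_le_one h0 hq.le (Nat.succ_ne_zero j)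
    linarith
  have key : ∏ j ∈ Finset.range k, (1 - ‖q‖ ^ (j+1)) ≤ ‖qPoch q q k‖ := by
    rw [qPoch, norm_prod]
    apply Finset.prod_le_prod (fun j _ => (hfac j).le)
    intro j _
    have : ‖q * q ^ j‖ = ‖q‖ ^ (j+1) := by
      rw [norm_mul, norm_pow, pow_succ]; ring
    calc 1 - ‖q‖ ^ (j+1) = ‖(1:ℂ)‖ - ‖q * q ^ j‖ := by rw [norm_one, this]
      _ ≤ ‖1 - q * q ^ j‖ := norm_sub_norm_le _ _
  have hpos : (0:ℝ) < ∏ j ∈ Finset.range k, (1 - ‖q‖ ^ (j+1)) :=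
    Finset.prod_pos (fun j _ => hfac j)
  calc ‖qPoch q q k‖⁻¹ ≤ (∏ j ∈ Finset.range k, (1 - ‖q‖ ^ (j+1)))⁻¹ :=
        inv_anti₀ hpos key
    _ = ∏ j ∈ Finset.range k, (1 - ‖q‖ ^ (j+1))⁻¹ := by
        rw [← Finset.prod_inv_distrib]
    _ ≤ ∏ j ∈ Finset.range k, Real.exp (‖q‖ ^ (j+1) / (1 - ‖q‖)) := by
        apply Finset.prod_le_prod (fun j _ => (inv_pos.2 (hfac j)).le)
        intro j _
        exact inv_one_sub_le_exp (pow_nonneg h0 _)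
          (pow_le_of_le_one h0 hq.le (Nat.succ_ne_zero j)) hq
    _ = Real.exp (∑ j ∈ Finset.range k, ‖q‖ ^ (j+1) / (1 - ‖q‖)) := (Real.exp_sum _ _).symm
    _ ≤ Real.exp (‖q‖ * (1 - ‖q‖)⁻¹ * (1 - ‖q‖)⁻¹) := by
        apply Real.exp_le_exp.2
        have h1 : (0:ℝ) < 1 - ‖q‖ := by linarith
        have : ∑ j ∈ Finset.range k, ‖q‖ ^ (j+1) / (1 - ‖q‖)
            = (∑ j ∈ Finset.range k, ‖q‖ ^ j) * (‖q‖ * (1 - ‖q‖)⁻¹) := by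
          rw [Finset.sum_mul]
          apply Finset.sum_congr rfl
          intro j _
          rw [pow_succ, div_eq_mul_inv]; ring
        rw [this]
        calc (∑ j ∈ Finset.range k, ‖q‖ ^ j) * (‖q‖ * (1 - ‖q‖)⁻¹)
            ≤ (1 - ‖q‖)⁻¹ * (‖q‖ * (1 - ‖q‖)⁻¹) :=
              mul_le_mul_of_nonneg_right (geom_bound h0 hq k) (by positivity)
          _ = ‖q‖ * (1 - ‖q‖)⁻¹ * (1 - ‖q‖)⁻¹ := by ring

/-- uniform bound on the coefficients -/
def Mbd (q a : ℂ) : ℝ :=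
  Real.exp (‖a‖ * (1 - ‖q‖)⁻¹) * Real.exp (‖q‖ * (1 - ‖q‖)⁻¹ * (1 - ‖q‖)⁻¹)

lemma norm_coef_le (q a : ℂ) (hq : ‖q‖ < 1) (k : ℕ) :
    ‖qPoch a q k / qPoch q q k‖ ≤ Mbd q a := by
  rw [div_eq_mul_inv, norm_mul, norm_inv]
  exact mul_le_mul (norm_qPoch_le a q hq k) (norm_qPochq_inv_le hq k)
    (by positivity) (Real.exp_pos _).le

lemma Mbd_pos (q a : ℂ) : 0 < Mbd q a := by
  unfold Mbd; positivity

lemma summable_coef (q a : ℂ) (hq : ‖q‖ < 1) {w : ℂ} (hw : ‖w‖ < 1) :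
    Summable (fun k : ℕ => qPoch a q k / qPoch q q k * w ^ k) := by
  apply Summable.of_norm_bounded
    ((summable_geometric_of_lt_one (norm_nonneg w) hw).mul_left (Mbd q a))
  intro k
  rw [norm_mul, norm_pow]
  exact mul_le_mul_of_nonneg_right (norm_coef_le q a hq k) (pow_nonneg (norm_nonneg w) k)

/-- the sum function -/
def Fsum (q a w : ℂ) : ℂ := ∑' k : ℕ, qPoch a q k / qPoch q q k * w ^ k

lemma one_sub_qpow_ne {q : ℂ} (hq : ‖q‖ < 1) (k : ℕ) : (1:ℂ) - q ^ (k+1) ≠ 0 := by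
  apply ne_one_of_norm_lt
  rw [norm_pow]
  calc ‖q‖ ^ (k+1) ≤ ‖q‖ := pow_le_of_le_one (norm_nonneg q) hq.le (Nat.succ_ne_zero k)
    _ < 1 := hq

lemma coef_rec (q a : ℂ) (hq : ‖q‖ < 1) (k : ℕ) :
    qPoch a q (k+1) / qPoch q q (k+1) * (1 - q ^ (k+1))
      = qPoch a q k / qPoch q q k * (1 - a * q ^ k) := by
  have h1 : qPoch q q (k+1) = qPoch q q k * (1 - q ^ (k+1)) := by
    rw [qPoch_succ]; ring_nf
  have h2 := qPochq_ne_zero hq k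
  have h3 := one_sub_qpow_ne hq k
  rw [qPoch_succ, h1]
  field_simp

lemma coef_zero (q a : ℂ) : qPoch a q 0 / qPoch q q 0 = 1 := by
  simp [qPoch]

lemma hasSum_F (q a : ℂ) (hq : ‖q‖ < 1) {w : ℂ} (hw : ‖w‖ < 1) :
    HasSum (fun k : ℕ => qPoch a q k / qPoch q q k * w ^ k) (Fsum q a w) :=
  (summable_coef q a hq hw).hasSum

lemma hasSum_F_shift (q a : ℂ) (hq : ‖q‖ < 1) {w : ℂ} (hw : ‖w‖ < 1) :
    HasSum (fun k : ℕ => qPoch a q (k+1) / qPoch q q (k+1) * w ^ (k+1)) (Fsum q a w - 1) := by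
  have h := hasSum_F q a hq hw
  have := (hasSum_nat_add_iff' (f := fun k : ℕ => qPoch a q k / qPoch q q k * w ^ k) 1).2 h
  simpa [coef_zero] using this

lemma funeq (q a : ℂ) (hq : ‖q‖ < 1) {w : ℂ} (hw : ‖w‖ < 1) :
    (1 - w) * Fsum q a w = (1 - a * w) * Fsum q a (q * w) := by
  have hqw : ‖q * w‖ < 1 := by
    rw [norm_mul]
    calc ‖q‖ * ‖w‖ ≤ 1 * ‖w‖ :=
          mul_le_mul_of_nonneg_right hq.le (norm_nonneg w)
      _ = ‖w‖ := one_mul _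
      _ < 1 := hw
  set c : ℕ → ℂ := fun k => qPoch a q k / qPoch q q k with hc
  have h1 : HasSum (fun k => c k * w ^ k) (Fsum q a w) := hasSum_F q a hq hw
  have h2 : HasSum (fun k => c k * (q*w) ^ k) (Fsum q a (q*w)) := hasSum_F q a hq hqw
  have hA : HasSum (fun k => c (k+1) * w ^ (k+1) - w * (c k * w ^ k))
      (Fsum q a w - 1 - w * Fsum q a w) :=
    (hasSum_F_shift q a hq hw).sub (h1.mul_left w)
  have hB : HasSum (fun k => c (k+1) * (q*w) ^ (k+1) - a * w * (c k * (q*w) ^ k))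
      (Fsum q a (q*w) - 1 - a * w * Fsum q a (q*w)) :=
    (hasSum_F_shift q a hq hqw).sub (h2.mul_left (a*w))
  have heq : (fun k => c (k+1) * w ^ (k+1) - w * (c k * w ^ k))
      = (fun k => c (k+1) * (q*w) ^ (k+1) - a * w * (c k * (q*w) ^ k)) := by
    funext k
    have hrec := coef_rec q a hq k
    rw [hc]
    simp only []
    linear_combination w ^ (k+1) * hrec
  rw [heq] at hA
  have := hA.unique hB
  linear_combination this

lemma iter_eq (q a z : ℂ) (hq : ‖q‖ < 1) (hz : ‖z‖ < 1) (n : ℕ) :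
    Fsum q a z * qPoch z q n = qPoch (a*z) q n * Fsum q a (q ^ n * z) := by
  induction n with
  | zero => simp [qPoch]
  | succ n ih =>
    have hqnz : ‖q ^ n * z‖ < 1 := by
      rw [norm_mul, norm_pow]
      calc ‖q‖ ^ n * ‖z‖ ≤ 1 * ‖z‖ :=
            mul_le_mul_of_nonneg_right (pow_le_one₀ (norm_nonneg q) hq.le) (norm_nonneg z)
        _ = ‖z‖ := one_mul _
        _ < 1 := hz
    have hfe := funeq q a hq hqnz
    rw [qPoch_succ, qPoch_succ]
    have hpow : q * (q ^ n * z) = q ^ (n+1) * z := by ring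
    rw [hpow] at hfe
    calc Fsum q a z * (qPoch z q n * (1 - z * q ^ n))
        = (qPoch (a*z) q n * Fsum q a (q ^ n * z)) * (1 - z * q ^ n) := by rw [← mul_assoc, ih]
      _ = qPoch (a*z) q n * ((1 - q ^ n * z) * Fsum q a (q ^ n * z)) := by ring
      _ = qPoch (a*z) q n * ((1 - a * (q ^ n * z)) * Fsum q a (q ^ (n+1) * z)) := by rw [hfe]
      _ = qPoch (a*z) q n * (1 - a * z * q ^ n) * Fsum q a (q ^ (n+1) * z) := by ring

lemma summable_log (q w : ℂ) (hq : ‖q‖ < 1) :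
    Summable (fun j : ℕ => Complex.log (1 - w * q ^ j)) := by
  apply Summable.of_norm_bounded_eventually_nat
    (((summable_geometric_of_lt_one (norm_nonneg q) hq).mul_left ‖w‖).mul_left (3/2))
  have htend : Filter.Tendsto (fun j : ℕ => ‖w‖ * ‖q‖ ^ j) Filter.atTop (nhds 0) := by
    simpa using (tendsto_pow_atTop_nhds_zero_of_lt_one (norm_nonneg q) hq).const_mul ‖w‖
  filter_upwards [htend.eventually_le_const (by norm_num : (0:ℝ) < 1/2)] with j hj
  have hnorm : ‖-(w * q ^ j)‖ ≤ 1/2 := by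
    rw [norm_neg, norm_mul, norm_pow]; exact hj
  have := Complex.norm_log_one_add_half_le_self hnorm
  rw [show (1:ℂ) + -(w * q ^ j) = 1 - w * q ^ j by ring] at this
  calc ‖Complex.log (1 - w * q ^ j)‖ ≤ 3/2 * ‖-(w * q ^ j)‖ := this
    _ = 3/2 * (‖w‖ * ‖q‖ ^ j) := by rw [norm_neg, norm_mul, norm_pow]

lemma hasProd_qPochInf (q w : ℂ) (hq : ‖q‖ < 1) :
    HasProd (fun j : ℕ => 1 - w * q ^ j) (qPochInf w q) := by
  by_cases hz : ∀ j : ℕ, (1:ℂ) - w * q ^ j ≠ 0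
  · exact (Complex.hasProd_of_hasSum_log (fun j => hz j)
      (summable_log q w hq).hasSum).multipliable.hasProd
  · push_neg at hz
    obtain ⟨j0, hj0⟩ := hz
    have h0 : HasProd (fun j : ℕ => 1 - w * q ^ j) 0 := by
      rw [HasProd]
      apply Filter.Tendsto.congr' (f₁ := fun _ => (0:ℂ)) _ tendsto_const_nhds
      filter_upwards [Filter.eventually_ge_atTop {j0}] with s hs
      exact (Finset.prod_eq_zero (hs (Finset.mem_singleton_self j0)) hj0).symm
    have : qPochInf w q = 0 := h0.tprod_eq
    rw [this]; exact h0

lemma factor_ne_zero {q w : ℂ} (hq : ‖q‖ < 1) (hw : ‖w‖ < 1) (j : ℕ) :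
    (1:ℂ) - w * q ^ j ≠ 0 := by
  apply ne_one_of_norm_lt
  rw [norm_mul, norm_pow]
  calc ‖w‖ * ‖q‖ ^ j ≤ ‖w‖ * 1 :=
        mul_le_mul_of_nonneg_left (pow_le_one₀ (norm_nonneg q) hq.le) (norm_nonneg w)
    _ = ‖w‖ := mul_one _
    _ < 1 := hw

lemma qPochInf_ne_zero {q w : ℂ} (hq : ‖q‖ < 1) (hw : ‖w‖ < 1) : qPochInf w q ≠ 0 := by
  have h := Complex.cexp_tsum_eq_tprod
    (fun j => factor_ne_zero hq hw j) (summable_log q w hq)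
  have h2 := h
  have : qPochInf w q = Complex.exp (∑' j : ℕ, Complex.log (1 - w * q ^ j)) := by
    rw [qPochInf, ← h2]
  rw [this]
  exact Complex.exp_ne_zero _

lemma norm_F_sub_one (q a : ℂ) (hq : ‖q‖ < 1) {w : ℂ} (hw : ‖w‖ ≤ 1/2) :
    ‖Fsum q a w - 1‖ ≤ 2 * Mbd q a * ‖w‖ := by
  have hw1 : ‖w‖ < 1 := lt_of_le_of_lt hw (by norm_num)
  have hs := hasSum_F_shift q a hq hw1
  have hg : HasSum (fun k : ℕ => Mbd q a * ‖w‖ * ‖w‖ ^ k)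
      (Mbd q a * ‖w‖ * (1 - ‖w‖)⁻¹) :=
    (hasSum_geometric_of_lt_one (norm_nonneg w) hw1).mul_left _
  have hb : ‖Fsum q a w - 1‖ ≤ Mbd q a * ‖w‖ * (1 - ‖w‖)⁻¹ := by
    rw [← hs.tsum_eq]
    apply tsum_of_norm_bounded hg
    intro k
    rw [norm_mul, norm_pow]
    calc ‖qPoch a q (k+1) / qPoch q q (k+1)‖ * ‖w‖ ^ (k+1)
        ≤ Mbd q a * ‖w‖ ^ (k+1) :=
          mul_le_mul_of_nonneg_right (norm_coef_le q a hq _) (pow_nonneg (norm_nonneg w) _)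
      _ = Mbd q a * ‖w‖ * ‖w‖ ^ k := by rw [pow_succ]; ring
  apply hb.trans
  have h2 : (1 - ‖w‖)⁻¹ ≤ 2 := by
    rw [inv_le_comm₀ (by linarith) (by norm_num)]
    linarith
  calc Mbd q a * ‖w‖ * (1 - ‖w‖)⁻¹ ≤ Mbd q a * ‖w‖ * 2 :=
        mul_le_mul_of_nonneg_left h2 (mul_nonneg (Mbd_pos q a).le (norm_nonneg w))
    _ = 2 * Mbd q a * ‖w‖ := by ring

lemma tendsto_F (q a z : ℂ) (hq : ‖q‖ < 1) (hz : ‖z‖ < 1) :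
    Filter.Tendsto (fun n : ℕ => Fsum q a (q ^ n * z)) Filter.atTop (nhds 1) := by
  have h0 : Filter.Tendsto (fun n : ℕ => ‖q‖ ^ n * ‖z‖) Filter.atTop (nhds 0) := by
    simpa using (tendsto_pow_atTop_nhds_zero_of_lt_one (norm_nonneg q) hq).mul_const ‖z‖
  have hmain : Filter.Tendsto (fun n : ℕ => Fsum q a (q ^ n * z) - 1) Filter.atTop (nhds 0) := by
    apply squeeze_zero_norm' (a := fun n => 2 * Mbd q a * (‖q‖ ^ n * ‖z‖))
    · filter_upwards [h0.eventually_le_const (by norm_num : (0:ℝ) < 1/2)] with n hn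
      have hnorm : ‖q ^ n * z‖ ≤ 1/2 := by
        rw [norm_mul, norm_pow]; exact hn
      calc ‖Fsum q a (q ^ n * z) - 1‖ ≤ 2 * Mbd q a * ‖q ^ n * z‖ :=
            norm_F_sub_one q a hq hnorm
        _ = 2 * Mbd q a * (‖q‖ ^ n * ‖z‖) := by rw [norm_mul, norm_pow]
    · simpa using h0.const_mul (2 * Mbd q a)
  have := hmain.add (tendsto_const_nhds (x := (1:ℂ)))
  simpa using this

/-- the q-binomial theorem. -/
theorem stmt1 (q a z : ℂ) (hq : ‖q‖ < 1) (hz : ‖z‖ < 1) :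
    HasSum (fun k : ℕ => qPoch a q k / qPoch q q k * z ^ k)
      (qPochInf (a * z) q / qPochInf z q) := by
  have hP := hasProd_qPochInf q z hq
  have hQ := hasProd_qPochInf q (a * z) hq
  have hPne : qPochInf z q ≠ 0 := qPochInf_ne_zero hq hz
  have hL : Filter.Tendsto (fun n : ℕ => Fsum q a z * qPoch z q n) Filter.atTop
      (nhds (Fsum q a z * qPochInf z q)) := hP.tendsto_prod_nat.const_mul _
  have hR : Filter.Tendsto (fun n : ℕ => qPoch (a*z) q n * Fsum q a (q ^ n * z)) Filter.atTop
      (nhds (qPochInf (a*z) q * 1)) := hQ.tendsto_prod_nat.mul (tendsto_F q a z hq hz)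
  have hkey : Fsum q a z * qPochInf z q = qPochInf (a*z) q * 1 :=
    tendsto_nhds_unique (hL.congr (iter_eq q a z hq hz)) hR
  have hF : Fsum q a z = qPochInf (a*z) q / qPochInf z q := by
    rw [eq_div_iff hPne]
    linear_combination hkey
  rw [← hF]
  exact hasSum_F q a hq hz
end
end

section
/- For 0 < q < 1 and parameter a with 0 < aq < 1, writing a = q^α and p = 1/q, the little q-Laguerre polynomials satisfy the Rodrigues formula (qx;q)_∞ x^α q_n(x;a|q) = (q^{n(n-1)/2} a^n (1-q)^n / (aq;q)_n) · D_p^n [x^{n+α}(qx;q)_∞], where D_p f(x) = (f(px) - f(x))/(x(p-1)). -/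
set_option maxHeartbeats 1000000

open Finset

noncomputable section

/-- finite q-Pochhammer symbol (z;q)_k (real version) -/
def rqPoch (z q : ℝ) (k : ℕ) : ℝ := ∏ j ∈ Finset.range k, (1 - z * q ^ j)

/-- infinite q-Pochhammer symbol (z;q)_∞ (real version) -/
def rqPochInf (z q : ℝ) : ℝ := ∏' j : ℕ, (1 - z * q ^ j)

/-- the p-difference operator D_p f(x) = (f(px) - f(x))/(x(p-1)) -/
def Dp (p : ℝ) (f : ℝ → ℝ) : ℝ → ℝ := fun x => (f (p * x) - f x) / (x * (p - 1))

/-- little q-Laguerre polynomial (real version) -/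
def rqLag (q aa : ℝ) (n : ℕ) (x : ℝ) : ℝ :=
  ∑ k ∈ Finset.range (n + 1),
    rqPoch (q ^ (-(n:ℤ))) q k / (rqPoch (aa * q) q k * rqPoch q q k) * (q * x) ^ k

lemma rqPoch_succ (z q : ℝ) (k : ℕ) : rqPoch z q (k+1) = rqPoch z q k * (1 - z * q ^ k) :=
  Finset.prod_range_succ _ _

lemma rqPoch_succ' (z q : ℝ) (k : ℕ) : rqPoch z q (k+1) = (1 - z) * rqPoch (z*q) q k := by
  rw [rqPoch, rqPoch, Finset.prod_range_succ']
  simp only [pow_zero, mul_one]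
  rw [mul_comm]
  congr 1
  exact Finset.prod_congr rfl fun j _ => by rw [pow_succ']; ring

lemma rqPoch_pos (b q : ℝ) (hb0 : 0 ≤ b) (hb1 : b < 1) (hq0 : 0 ≤ q) (hq1 : q ≤ 1) (k : ℕ) :
    0 < rqPoch b q k := by
  refine Finset.prod_pos fun j _ => ?_
  have h1 : q ^ j ≤ 1 := pow_le_one₀ hq0 hq1
  have h2 : 0 ≤ q ^ j := pow_nonneg hq0 j
  nlinarith

lemma rqPoch_neg_self (q : ℝ) (hq : q ≠ 0) (n : ℕ) : rqPoch (q ^ (-(n:ℤ))) q (n+1) = 0 := by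
  refine Finset.prod_eq_zero (Finset.self_mem_range_succ n) ?_
  rw [← zpow_natCast q n, ← zpow_add₀ hq]
  simp

lemma multipliable_aux {q : ℝ} (hq0 : 0 < q) (hq1 : q < 1) (y : ℝ) (hy : 0 ≤ y) :
    Multipliable (fun j : ℕ => 1 - y * q ^ j) := by
  obtain ⟨N, hN⟩ : ∃ N : ℕ, y * q ^ N < 1/2 := by
    obtain ⟨N, hN2⟩ := exists_pow_lt_of_lt_one (show (0:ℝ) < 1/(2*(y+1)) by positivity) hq1
    refine ⟨N, ?_⟩
    have hqN : (0:ℝ) < q ^ N := pow_pos hq0 N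
    have : y * q ^ N ≤ (y+1) * q ^ N := by nlinarith
    have h2 : (y+1) * q ^ N < (y+1) * (1/(2*(y+1))) := by
      apply mul_lt_mul_of_pos_left hN2 (by linarith)
    have h3 : (y+1) * (1/(2*(y+1))) = 1/2 := by field_simp
    linarith
  apply Multipliable.comp_nat_add (k := N)
  have hband : ∀ j : ℕ, 0 ≤ y * q ^ (j + N) ∧ y * q ^ (j + N) ≤ 1/2 := by
    intro j
    constructor
    · positivity
    · have h1 : q ^ (j + N) ≤ q ^ N := pow_le_pow_of_le_one hq0.le hq1.le (by omega)
      nlinarith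
  have hpos : ∀ (x : Unit) (n : ℕ), 0 < (fun (n : ℕ) (_ : Unit) => 1 - y * q ^ (n + N)) n x := by
    intro _ n
    have := hband n
    simp only
    linarith [this.1, this.2]
  refine Real.multipliable_of_summable_log (fun n => hpos () n) ?_
  have hbound : ∀ n : ℕ, ‖Real.log (1 - y * q ^ (n + N))‖ ≤ 2 * (y * q ^ N) * q ^ n := by
    intro n
    set t := y * q ^ (n + N) with ht
    have h1 : 0 ≤ t := (hband n).1
    have h2 : t ≤ 1/2 := (hband n).2
    have hpt : (0:ℝ) < 1 - t := by linarith
    have hlog_le : Real.log (1 - t) ≤ 0 := Real.log_nonpos (by linarith) (by linarith)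
    rw [Real.norm_eq_abs, abs_of_nonpos hlog_le]
    have h3 : -Real.log (1 - t) = Real.log (1 - t)⁻¹ := (Real.log_inv _).symm
    have h4 : Real.log (1 - t)⁻¹ ≤ (1 - t)⁻¹ - 1 :=
      Real.log_le_sub_one_of_pos (inv_pos.mpr hpt)
    have h5 : (1 - t)⁻¹ ≤ 1 + 2 * t := by
      rw [inv_eq_one_div, div_le_iff₀ hpt]; nlinarith
    have h6 : -Real.log (1 - t) ≤ 2 * t := by rw [h3]; linarith
    calc -Real.log (1 - t) ≤ 2 * t := h6
      _ = 2 * (y * q ^ N) * q ^ n := by rw [ht, pow_add]; ring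
  exact Summable.of_norm_bounded (g := fun n : ℕ => 2 * (y * q ^ N) * q ^ n)
    ((summable_geometric_of_lt_one hq0.le hq1).mul_left _) hbound

lemma pochInf_step {q : ℝ} (hq0 : 0 < q) (hq1 : q < 1) (y : ℝ) (hy : 0 ≤ y) :
    rqPochInf y q = (1 - y) * rqPochInf (q*y) q := by
  have hm : Multipliable (fun n : ℕ => 1 - y * q ^ (n+1)) := by
    refine (multipliable_aux hq0 hq1 (q*y) (by positivity)).congr fun n => ?_
    rw [pow_succ']; ring
  rw [rqPochInf, tprod_eq_zero_mul' hm]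
  simp only [pow_zero, mul_one, rqPochInf]
  congr 1
  refine tprod_congr fun j => ?_
  rw [pow_succ']; ring

lemma star_abstract (x q aq : ℝ) (n : ℕ) (d e : ℕ → ℝ)
    (hd_top : d (n+1) = 0)
    (h0 : d 0 - aq * d 0 - (1-aq) * e 0 = 0)
    (hstep : ∀ k, k < n+1 → d (k+1) * (1 - aq*q^(k+1)) - (1-aq) * e (k+1) * q^(k+1) = d k) :
    (1-x) * (∑ k ∈ range (n+1), d k * x^k) - aq * (∑ k ∈ range (n+1), d k * (q*x)^k)
      = (1-aq) * ∑ k ∈ range (n+2), e k * (q*x)^k := by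
  have main2 : ∑ k ∈ range (n+2),
      (d k * x^k - aq*(d k * (q*x)^k) - (1-aq)*(e k * (q*x)^k))
      = ∑ k ∈ range (n+1), d k * x^k * x := by
    rw [Finset.sum_range_succ']
    simp only [pow_zero, mul_one]
    rw [show d 0 - aq*(d 0) - (1-aq)*(e 0) = 0 by linarith, add_zero]
    refine Finset.sum_congr rfl fun k hk => ?_
    have h := hstep k (Finset.mem_range.mp hk)
    linear_combination (x^k*x) * h
  have E1 : ∑ k ∈ range (n+2), d k * x ^ k = ∑ k ∈ range (n+1), d k * x ^ k := by
    rw [Finset.sum_range_succ, hd_top]; ring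
  have E2 : ∑ k ∈ range (n+2), d k * (q*x) ^ k = ∑ k ∈ range (n+1), d k * (q*x) ^ k := by
    rw [Finset.sum_range_succ, hd_top]; ring
  have expand : ∑ k ∈ range (n+2),
      (d k * x^k - aq*(d k * (q*x)^k) - (1-aq)*(e k * (q*x)^k))
      = (∑ k ∈ range (n+1), d k * x^k) - aq*(∑ k ∈ range (n+1), d k*(q*x)^k)
        - (1-aq)*(∑ k ∈ range (n+2), e k*(q*x)^k) := by
    rw [Finset.sum_sub_distrib, Finset.sum_sub_distrib, ← Finset.mul_sum, ← Finset.mul_sum,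
      E1, E2]
  have hsum : (∑ k ∈ range (n+1), d k * x^k * x) = (∑ k ∈ range (n+1), d k * x^k) * x :=
    (Finset.sum_mul _ _ _).symm
  rw [expand, hsum] at main2
  linear_combination main2

lemma star (q a : ℝ) (hq0 : 0 < q) (hq1 : q < 1) (ha0 : 0 < a*q) (ha1 : a*q < 1)
    (n : ℕ) (x : ℝ) :
    (1-x) * rqLag q (a*q) n (x/q) - (a*q) * rqLag q (a*q) n x
      = (1 - a*q) * rqLag q a (n+1) x := by
  have hq : q ≠ 0 := ne_of_gt hq0
  have hqx : q * (x/q) = x := by field_simp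
  have hCq : ∀ k, rqPoch q q k ≠ 0 := fun k =>
    ne_of_gt (rqPoch_pos q q hq0.le hq1 hq0.le hq1.le k)
  have haqq0 : (0:ℝ) ≤ a*q*q := by positivity
  have haqq1 : a*q*q < 1 := by nlinarith
  have hB : ∀ k, rqPoch (a*q*q) q k ≠ 0 := fun k =>
    ne_of_gt (rqPoch_pos (a*q*q) q haqq0 haqq1 hq0.le hq1.le k)
  have haq1 : (1:ℝ) - a*q ≠ 0 := ne_of_gt (by linarith)
  simp only [rqLag, hqx]
  refine star_abstract x q (a*q) n
    (fun k => rqPoch (q ^ (-(n:ℤ))) q k / (rqPoch (a*q*q) q k * rqPoch q q k))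
    (fun k => rqPoch (q ^ (-((n+1:ℕ)):ℤ)) q k / (rqPoch (a*q) q k * rqPoch q q k))
    ?_ ?_ ?_
  · rw [rqPoch_neg_self q hq n, zero_div]
  · simp [rqPoch]
  · intro k hk
    have hz : (q:ℝ) ^ (-((n+1:ℕ)):ℤ) * q = q ^ (-(n:ℤ)) := by
      rw [← zpow_add_one₀ hq]
      congr 1
      push_cast
      ring
    rw [rqPoch_succ (q ^ (-(n:ℤ))) q k, rqPoch_succ (a*q*q) q k, rqPoch_succ q q k,
      rqPoch_succ' (q ^ (-((n+1:ℕ)):ℤ)) q k, hz, rqPoch_succ' (a*q) q k]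
    have h2 : (q:ℝ) ^ (-((n+1:ℕ)):ℤ) = (q^n*q)⁻¹ := by
      push_cast
      rw [zpow_neg, zpow_add_one₀ hq, zpow_natCast]
    have h1 : (q:ℝ) ^ (-(n:ℤ)) = (q^n)⁻¹ := by rw [zpow_neg, zpow_natCast]
    rw [h2, h1, pow_succ q k]
    have hqn : (q:ℝ)^n ≠ 0 := pow_ne_zero n hq
    have hB' : rqPoch (a*q*q) q k ≠ 0 := hB k
    have hC' : rqPoch q q k ≠ 0 := hCq k
    have hqk : (1:ℝ) - q*q^k ≠ 0 := by
      have h3 : q * q ^ k ≤ q := by nlinarith [pow_le_one₀ hq0.le hq1.le (n := k), pow_pos hq0 k]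
      have h4 : q*q^k > 0 := by positivity
      intro hcon; nlinarith
    have haqk : (1:ℝ) - a*q*q*q^k ≠ 0 := by
      have h3 : q * q ^ k ≤ q := by nlinarith [pow_le_one₀ hq0.le hq1.le (n := k), pow_pos hq0 k]
      have h4 : 0 < q*q^k := by positivity
      have h5 : a*q*q*q^k < 1 := by nlinarith
      have h6 : 0 < a*q*q*q^k := by nlinarith
      intro hcon; nlinarith
    generalize rqPoch (q ^ n)⁻¹ q k = P at *
    generalize rqPoch (a*q*q) q k = B at hB' ⊢
    generalize rqPoch q q k = C at hC' ⊢
    rw [show a*q*(q^k*q) = a*q*q*q^k by ring]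
    generalize hU : 1 - a*q*q*q^k = U at *
    generalize hV : 1 - q*q^k = V at *
    field_simp
    subst hU hV
    ring

lemma main_lemma (q : ℝ) (hq0 : 0 < q) (hq1 : q < 1) :
    ∀ (n : ℕ) (α a : ℝ), a = q ^ α → 0 < a * q → a * q < 1 →
      ∀ x : ℝ, 0 < x →
      (Dp (1/q))^[n] (fun t : ℝ => t ^ ((n:ℝ) + α) * rqPochInf (q*t) q) x
        = x ^ α * rqPochInf (q*x) q *
            (rqPoch (a*q) q n / (q ^ (n*(n-1)/2) * a^n * (1-q)^n)) * rqLag q a n x := by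
  intro n
  induction n with
  | zero =>
    intro α a haα ha0 ha1 x hx
    simp [rqLag, rqPoch]
  | succ n IH =>
    intro α a haα ha0 ha1 x hx
    have hq : q ≠ 0 := ne_of_gt hq0
    have ha : 0 < a := by rw [haα]; exact Real.rpow_pos_of_pos hq0 α
    have hexp : ((n+1:ℕ):ℝ) + α = (n:ℝ) + (α+1) := by push_cast; ring
    rw [show (fun t : ℝ => t ^ (((n+1:ℕ):ℝ) + α) * rqPochInf (q*t) q)
        = (fun t : ℝ => t ^ ((n:ℝ) + (α+1)) * rqPochInf (q*t) q) by
      funext t; rw [hexp]]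
    rw [Function.iterate_succ_apply']
    have haq : a*q = q^(α+1) := by rw [haα, Real.rpow_add hq0, Real.rpow_one]
    have haq0' : 0 < (a*q)*q := by positivity
    have haq1' : (a*q)*q < 1 := by nlinarith
    have hx' : 0 < 1/q * x := by positivity
    have IH1 := IH (α+1) (a*q) haq haq0' haq1' x hx
    have IH2 := IH (α+1) (a*q) haq haq0' haq1' (1/q*x) hx'
    have hDp : ∀ (g : ℝ → ℝ) (y : ℝ), Dp (1/q) g y = (g (1/q*y) - g y)/(y*(1/q-1)) :=
      fun g y => rfl
    rw [hDp, IH1, IH2]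
    -- rewrite pieces of IH2
    have hr1 : ((1/q) * x : ℝ) ^ (α+1) = (a*q)⁻¹ * x^(α+1) := by
      rw [Real.mul_rpow (by positivity) hx.le, one_div, Real.inv_rpow hq0.le, ← haq]
    have hr2 : q * (1/q * x) = x := by field_simp
    have hr3 : rqPochInf x q = (1-x) * rqPochInf (q*x) q := pochInf_step hq0 hq1 x hx.le
    have hr4 : (1:ℝ)/q * x = x/q := by ring
    rw [hr1, hr2, hr3, hr4]
    have hr5 : x ^ (α+1) = x^α * x := by rw [Real.rpow_add hx, Real.rpow_one]
    rw [hr5]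
    -- exponent arithmetic
    have hE : (n+1)*(n+1-1)/2 = n*(n-1)/2 + n := by
      simp only [Nat.add_sub_cancel]
      have h := Nat.choose_two_right (n+1)
      have h2 := Nat.choose_two_right n
      have h3 : (n+1).choose 2 = n.choose 2 + n := by
        rw [Nat.choose_succ_succ, Nat.choose_one_right, Nat.add_comm]
      simp only [Nat.add_sub_cancel] at h
      omega
    rw [hE, pow_add]
    rw [rqPoch_succ' (a*q) q n]
    -- use star to eliminate rqLag q a (n+1) x
    have haqne : (1:ℝ) - a*q ≠ 0 := ne_of_gt (by linarith)
    have hstar := star q a hq0 hq1 ha0 ha1 n x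
    have hM : rqLag q a (n+1) x
        = ((1-x) * rqLag q (a*q) n (x/q) - (a*q) * rqLag q (a*q) n x) / (1-(a*q)) := by
      rw [eq_div_iff haqne]; linarith [hstar]
    rw [hM]
    have h1q : (1:ℝ)/q - 1 ≠ 0 := by
      have : (1:ℝ) < 1/q := one_lt_one_div hq0 hq1
      intro hcon; nlinarith
    have hRne : rqPoch (a*q*q) q n ≠ 0 := by
      have : a*q*q < 1 := by nlinarith
      exact ne_of_gt (rqPoch_pos (a*q*q) q (by positivity) this hq0.le hq1.le n)
    have hqe : (q:ℝ) ^ (n*(n-1)/2) ≠ 0 := pow_ne_zero _ hq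
    have h1qne : (1:ℝ) - q ≠ 0 := ne_of_gt (by linarith)
    field_simp
    ring

/-- Rodrigues formula for the little q-Laguerre polynomials, a = q^α, p = 1/q:
(qx;q)_∞ x^α q_n(x;a|q) = (q^{n(n-1)/2} a^n (1-q)^n/(aq;q)_n) D_p^n [x^{n+α}(qx;q)_∞]. -/
theorem stmt12 (q α a : ℝ) (hq0 : 0 < q) (hq1 : q < 1) (haα : a = q ^ α)
    (ha0 : 0 < a * q) (ha1 : a * q < 1) (n : ℕ) :
    ∀ x : ℝ, 0 < x →
      rqPochInf (q * x) q * x ^ α * rqLag q a n x =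
        q ^ (n * (n - 1) / 2) * a ^ n * (1 - q) ^ n / rqPoch (a * q) q n *
          (Dp (1 / q))^[n] (fun t => t ^ ((n : ℝ) + α) * rqPochInf (q * t) q) x := by
  intro x hx
  rw [main_lemma q hq0 hq1 n α a haα ha0 ha1 x hx]
  have hq : q ≠ 0 := ne_of_gt hq0
  have ha : 0 < a := by rw [haα]; exact Real.rpow_pos_of_pos hq0 α
  have hR : rqPoch (a*q) q n ≠ 0 :=
    ne_of_gt (rqPoch_pos (a*q) q (le_of_lt ha0) ha1 hq0.le hq1.le n)
  have hqe : (q:ℝ) ^ (n*(n-1)/2) ≠ 0 := pow_ne_zero _ hq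
  have h1qne : (1:ℝ) - q ≠ 0 := ne_of_gt (by linarith)
  have hR2 : rqPoch (q*a) q n ≠ 0 := by rwa [mul_comm q a]
  field_simp
end
end
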